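/- arXiv:1408.2043 — 2 statements merged into one kernel-verified Lean document; each statement's English description precedes it below -/
import Mathlib

section
/- For every k ∈ (0,1) and every u > 0, one has √(1−k²sin²u)·E(u,k) > k²·sin u·cos u. (The function f₂(p) = dn p·E(p) − k² sn p·cn p is positive for all p > 0 and k ∈ (0,1), written in the Legendre variable u = am(p,k).) -/
/-!
With `Δ(u) = √(1 - k² sin² u)`, the function `E(u,k) - k² sin u cos u / Δ(u)` vanishes at `0`
and has derivative `(1 - k²) / Δ(u)³ > 0`, so it is positive for `u > 0`; multiplying by
`Δ(u) > 0` gives the claim.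
-/

open Real

/-- Incomplete elliptic integral of the second kind in Legendre form:
`E(u,k) = ∫₀ᵘ √(1 − k² sin² φ) dφ`. -/
noncomputable def EllE (u k : ℝ) : ℝ :=
  ∫ φ in (0:ℝ)..u, Real.sqrt (1 - k ^ 2 * Real.sin φ ^ 2)

lemma one_sub_sq_mul_sin_sq_pos {k : ℝ} (hk : k ^ 2 < 1) (φ : ℝ) :
    0 < 1 - k ^ 2 * sin φ ^ 2 := by
  nlinarith [sin_sq_le_one φ, sq_nonneg k]

lemma hasDerivAt_ellE (k v : ℝ) : HasDerivAt (fun u => EllE u k) √(1 - k ^ 2 * sin v ^ 2) v := by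
  have hcont : Continuous fun φ => √(1 - k ^ 2 * sin φ ^ 2) := by fun_prop
  exact intervalIntegral.integral_hasDerivAt_right (hcont.intervalIntegrable 0 v)
    hcont.stronglyMeasurable.stronglyMeasurableAtFilter hcont.continuousAt

lemma hasDerivAt_sqrt_one_sub_sq_mul_sin_sq {k v : ℝ} (hD : 0 < 1 - k ^ 2 * sin v ^ 2) :
    HasDerivAt (fun φ => √(1 - k ^ 2 * sin φ ^ 2))
      (-(k ^ 2 * sin v * cos v) / √(1 - k ^ 2 * sin v ^ 2)) v := by
  convert (((hasDerivAt_sin v).fun_pow 2).const_mul (k ^ 2)).const_sub 1 |>.sqrt hD.ne' using 1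
  field_simp
  ring

lemma hasDerivAt_ellE_sub {k v : ℝ} (hD : 0 < 1 - k ^ 2 * sin v ^ 2) :
    HasDerivAt (fun u => EllE u k - k ^ 2 * sin u * cos u / √(1 - k ^ 2 * sin u ^ 2))
      ((1 - k ^ 2) / √(1 - k ^ 2 * sin v ^ 2) ^ 3) v := by
  have hΔ : 0 < √(1 - k ^ 2 * sin v ^ 2) := sqrt_pos.2 hD
  have hnum := ((hasDerivAt_sin v).const_mul (k ^ 2)).fun_mul (hasDerivAt_cos v)
  refine ((hasDerivAt_ellE k v).fun_sub
    (hnum.fun_div (hasDerivAt_sqrt_one_sub_sq_mul_sin_sq hD) hΔ.ne')).congr_deriv ?_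
  have hΔsq : √(1 - k ^ 2 * sin v ^ 2) ^ 2 = 1 - k ^ 2 * sin v ^ 2 := sq_sqrt hD.le
  generalize √(1 - k ^ 2 * sin v ^ 2) = Δ at hΔ hΔsq ⊢
  field_simp
  linear_combination (Δ ^ 2 + (1 - k ^ 2 * sin v ^ 2) - k ^ 2 * (cos v ^ 2 - sin v ^ 2)) * hΔsq
    - k ^ 2 * sin_sq_add_cos_sq v

lemma ellE_zero (k : ℝ) : EllE 0 k = 0 :=
  intervalIntegral.integral_same

lemma strictMono_ellE_sub {k : ℝ} (hk : k ^ 2 < 1) :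
    StrictMono fun u => EllE u k - k ^ 2 * sin u * cos u / √(1 - k ^ 2 * sin u ^ 2) :=
  strictMono_of_hasDerivAt_pos (fun v => hasDerivAt_ellE_sub (one_sub_sq_mul_sin_sq_pos hk v))
    fun v => div_pos (by linarith) (pow_pos (sqrt_pos.2 (one_sub_sq_mul_sin_sq_pos hk v)) 3)

/-- For every `k ∈ (0,1)` and every `u > 0`:
`√(1 − k² sin² u) · E(u,k) > k² · sin u · cos u`
(the function `f₂` of the paper is positive, in the Legendre variable). -/
theorem f2_positive (k u : ℝ) (hk : k ∈ Set.Ioo (0:ℝ) 1) (hu : 0 < u) :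
    Real.sqrt (1 - k ^ 2 * Real.sin u ^ 2) * EllE u k > k ^ 2 * Real.sin u * Real.cos u := by
  have hk2 : k ^ 2 < 1 := pow_lt_one₀ hk.1.le hk.2 two_ne_zero
  have hΔ : 0 < √(1 - k ^ 2 * sin u ^ 2) := sqrt_pos.2 (one_sub_sq_mul_sin_sq_pos hk2 u)
  have hf : 0 < EllE u k - k ^ 2 * sin u * cos u / √(1 - k ^ 2 * sin u ^ 2) := by
    simpa [ellE_zero] using strictMono_ellE_sub hk2 hu
  have hmul : √(1 - k ^ 2 * sin u ^ 2) * EllE u k - k ^ 2 * sin u * cos u =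
      √(1 - k ^ 2 * sin u ^ 2) * (EllE u k - k ^ 2 * sin u * cos u / √(1 - k ^ 2 * sin u ^ 2)) := by
    field_simp
  linarith [mul_pos hΔ hf]
end

section
/- Let k ∈ (0,1), τ, p ∈ ℝ, and set φ = τ − p, φ_t = τ + p, A = dn(φ_t,k) − k·cn(φ_t,k), B = dn(φ,k) − k·cn(φ,k), Δ = 1 − k²·sn²(p,k)·sn²(τ,k). Then A > 0, B > 0, and with z = ln(A/B) one has cosh(z/2) = 1/√Δ and sinh(z/2) = k·sn(p,k)·sn(τ,k)/√Δ. (Identities (3.3)–(3.4), with s₁ = 1, for the vertical coordinate of extremal trajectories with λ ∈ C₁, obtained from the addition formulas for Jacobi elliptic functions.) -/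
/-!
Euler's argument gives the addition formula: the derivative in `t` of
`(dn t · dn (c - t) - k cn t · cn (c - t)) / (1 - k sn t · sn (c - t))` vanishes, and its value at
`t = 0` is `dn c - k cn c`. Taking `c = τ ± p`, `t = τ` shows `A (1 - w) = B (1 + w)` with
`w = k sn p sn τ`, while `(1 + w) (1 - w) = Δ`; and for `a, b > 0` the hyperbolic cosine and sine
of `log (a / b) / 2` are `(a ± b) / (2 √(a b))`.
-/

open Real

/-- Incomplete elliptic integral of the first kind in Legendre form:
`F(u,k) = ∫₀ᵘ dφ/√(1 − k² sin² φ)`. -/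
noncomputable def EllF (u k : ℝ) : ℝ :=
  ∫ φ in (0:ℝ)..u, 1 / Real.sqrt (1 - k ^ 2 * Real.sin φ ^ 2)

/-- The Jacobi amplitude `am(·,k)`: the inverse of the strictly increasing bijection
`u ↦ F(u,k)` of `ℝ` onto `ℝ` (for `k ∈ (0,1)`). -/
noncomputable def am (p k : ℝ) : ℝ := Function.invFun (fun u => EllF u k) p

/-- Jacobi elliptic sine `sn(p,k) = sin(am(p,k))`. -/
noncomputable def sn (p k : ℝ) : ℝ := Real.sin (am p k)

/-- Jacobi elliptic cosine `cn(p,k) = cos(am(p,k))`. -/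
noncomputable def cn (p k : ℝ) : ℝ := Real.cos (am p k)

/-- Jacobi delta amplitude `dn(p,k) = √(1 − k² sn²(p,k))`. -/
noncomputable def dn (p k : ℝ) : ℝ := Real.sqrt (1 - k ^ 2 * sn p k ^ 2)

open Filter

section Jacobi

variable {k : ℝ}

lemma one_sub_mul_sin_sq_pos (hk : k ^ 2 < 1) (u : ℝ) : 0 < 1 - k ^ 2 * sin u ^ 2 := by
  nlinarith [sin_sq_le_one u, sq_nonneg k]

lemma continuous_ellF_integrand (hk : k ^ 2 < 1) :
    Continuous fun u : ℝ => 1 / √(1 - k ^ 2 * sin u ^ 2) :=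
  continuous_const.div (by fun_prop) fun u => (sqrt_pos.2 (one_sub_mul_sin_sq_pos hk u)).ne'

lemma hasDerivAt_ellF (hk : k ^ 2 < 1) (u : ℝ) :
    HasDerivAt (fun u => EllF u k) (1 / √(1 - k ^ 2 * sin u ^ 2)) u :=
  ((continuous_ellF_integrand hk).integral_hasStrictDerivAt 0 u).hasDerivAt

lemma one_le_ellF_integrand (hk : k ^ 2 < 1) (u : ℝ) : 1 ≤ 1 / √(1 - k ^ 2 * sin u ^ 2) := by
  rw [le_div_iff₀ (sqrt_pos.2 (one_sub_mul_sin_sq_pos hk u)), one_mul]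
  exact sqrt_le_one.2 (by nlinarith [sq_nonneg (k * sin u)])

lemma strictMono_ellF (hk : k ^ 2 < 1) : StrictMono fun u => EllF u k :=
  strictMono_of_deriv_pos fun u => by
    rw [(hasDerivAt_ellF hk u).deriv]
    exact one_pos.trans_le (one_le_ellF_integrand hk u)

lemma monotone_ellF_sub_id (hk : k ^ 2 < 1) : Monotone fun u => EllF u k - u := by
  have hd (u : ℝ) : HasDerivAt (fun u => EllF u k - u) (1 / √(1 - k ^ 2 * sin u ^ 2) - 1) u :=
    (hasDerivAt_ellF hk u).sub (hasDerivAt_id u)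
  refine monotone_of_deriv_nonneg (fun u => (hd u).differentiableAt) fun u => ?_
  rw [(hd u).deriv, sub_nonneg]
  exact one_le_ellF_integrand hk u

lemma surjective_ellF (hk : k ^ 2 < 1) : Function.Surjective fun u => EllF u k := by
  have hcont : Continuous fun u => EllF u k :=
    continuous_iff_continuousAt.2 fun u => (hasDerivAt_ellF hk u).continuousAt
  have hmono := monotone_ellF_sub_id hk
  have hzero : EllF 0 k = 0 := intervalIntegral.integral_same
  refine hcont.surjective (tendsto_atTop_mono' _ ?_ tendsto_id)
    (tendsto_atBot_mono' _ ?_ tendsto_id)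
  · filter_upwards [eventually_ge_atTop 0] with u hu
    simpa [hzero] using hmono hu
  · filter_upwards [eventually_le_atBot 0] with u hu
    simpa [hzero] using hmono hu

noncomputable def ellFOrderIso (hk : k ^ 2 < 1) : ℝ ≃o ℝ :=
  StrictMono.orderIsoOfSurjective _ (strictMono_ellF hk) (surjective_ellF hk)

lemma am_eq_ellFOrderIso_symm (hk : k ^ 2 < 1) (x : ℝ) : am x k = (ellFOrderIso hk).symm x :=
  (strictMono_ellF hk).injective <|
    (Function.rightInverse_invFun (surjective_ellF hk) x).trans
      ((ellFOrderIso hk).apply_symm_apply x).symm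

lemma ellF_apply_am (hk : k ^ 2 < 1) (x : ℝ) : EllF (am x k) k = x := by
  rw [am_eq_ellFOrderIso_symm hk]
  exact (ellFOrderIso hk).apply_symm_apply x

lemma continuous_am (hk : k ^ 2 < 1) : Continuous fun x => am x k := by
  simp only [am_eq_ellFOrderIso_symm hk]
  exact (ellFOrderIso hk).symm.continuous

lemma ellF_neg (u : ℝ) : EllF (-u) k = -EllF u k := by
  have h := intervalIntegral.integral_comp_neg (a := 0) (b := -u)
    fun φ => 1 / √(1 - k ^ 2 * sin φ ^ 2)
  simp only [sin_neg, neg_sq, neg_neg, neg_zero] at h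
  rw [EllF, h, intervalIntegral.integral_symm, EllF]

lemma am_zero (hk : k ^ 2 < 1) : am 0 k = 0 := by
  rw [am_eq_ellFOrderIso_symm hk, OrderIso.symm_apply_eq]
  exact intervalIntegral.integral_same.symm

lemma am_neg (hk : k ^ 2 < 1) (x : ℝ) : am (-x) k = -am x k := by
  rw [am_eq_ellFOrderIso_symm hk, OrderIso.symm_apply_eq]
  change -x = EllF (-am x k) k
  rw [ellF_neg, ellF_apply_am hk]

lemma sn_zero (hk : k ^ 2 < 1) : sn 0 k = 0 := by simp [sn, am_zero hk]

lemma cn_zero (hk : k ^ 2 < 1) : cn 0 k = 1 := by simp [cn, am_zero hk]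

lemma dn_zero (hk : k ^ 2 < 1) : dn 0 k = 1 := by simp [dn, sn_zero hk]

lemma sn_neg (hk : k ^ 2 < 1) (x : ℝ) : sn (-x) k = -sn x k := by
  rw [sn, sn, am_neg hk, sin_neg]

lemma cn_neg (hk : k ^ 2 < 1) (x : ℝ) : cn (-x) k = cn x k := by
  rw [cn, cn, am_neg hk, cos_neg]

lemma dn_neg (hk : k ^ 2 < 1) (x : ℝ) : dn (-x) k = dn x k := by
  rw [dn, dn, sn_neg hk, neg_sq]

lemma sn_sq_add_cn_sq (x : ℝ) : sn x k ^ 2 + cn x k ^ 2 = 1 := sin_sq_add_cos_sq _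

lemma dn_pos (hk : k ^ 2 < 1) (x : ℝ) : 0 < dn x k :=
  sqrt_pos.2 (one_sub_mul_sin_sq_pos hk _)

lemma dn_sq (hk : k ^ 2 < 1) (x : ℝ) : dn x k ^ 2 = 1 - k ^ 2 * sn x k ^ 2 :=
  sq_sqrt (one_sub_mul_sin_sq_pos hk _).le

lemma hasDerivAt_am (hk : k ^ 2 < 1) (x : ℝ) : HasDerivAt (fun x => am x k) (dn x k) x := by
  have h := HasDerivAt.of_local_left_inverse (continuous_am hk).continuousAt
    (hasDerivAt_ellF hk (am x k)) (one_div_pos.2 (dn_pos hk x)).ne'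
    (Eventually.of_forall (ellF_apply_am hk))
  rwa [one_div, inv_inv] at h

lemma hasDerivAt_sn (hk : k ^ 2 < 1) (x : ℝ) :
    HasDerivAt (fun x => sn x k) (cn x k * dn x k) x :=
  (hasDerivAt_sin _).comp x (hasDerivAt_am hk x)

lemma hasDerivAt_cn (hk : k ^ 2 < 1) (x : ℝ) :
    HasDerivAt (fun x => cn x k) (-sn x k * dn x k) x :=
  (hasDerivAt_cos _).comp x (hasDerivAt_am hk x)

lemma hasDerivAt_dn (hk : k ^ 2 < 1) (x : ℝ) :
    HasDerivAt (fun x => dn x k) (-k ^ 2 * sn x k * cn x k) x := by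
  have h := ((((hasDerivAt_sn hk x).pow 2).const_mul (k ^ 2)).const_sub 1).sqrt
    (one_sub_mul_sin_sq_pos hk _).ne'
  refine h.congr_deriv ?_
  change -(k ^ 2 * ((2 : ℕ) * sn x k ^ (2 - 1) * (cn x k * dn x k))) / (2 * dn x k) = _
  field_simp [(dn_pos hk x).ne']
  ring

lemma one_sub_mul_sn_mul_sn_pos (hk : k ^ 2 < 1) (u v : ℝ) : 0 < 1 - k * sn u k * sn v k := by
  have hu := sin_sq_le_one (am u k)
  have hv := sin_sq_le_one (am v k)
  have h : (k * sn u k * sn v k) ^ 2 < 1 := by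
    calc (k * sn u k * sn v k) ^ 2 = k ^ 2 * (sn u k ^ 2 * sn v k ^ 2) := by ring
      _ ≤ k ^ 2 * 1 := by gcongr; exact mul_le_one₀ hu (sq_nonneg _) hv
      _ < 1 := by linarith
  nlinarith

lemma hasDerivAt_addition_quotient (hk : k ^ 2 < 1) (c x : ℝ) :
    HasDerivAt (fun t => (dn t k * dn (c - t) k - k * cn t k * cn (c - t) k) /
      (1 - k * sn t k * sn (c - t) k)) 0 x := by
  have hsub : HasDerivAt (fun t : ℝ => c - t) (-1) x := by
    simpa using (hasDerivAt_id x).const_sub c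
  have hs₁ := hasDerivAt_sn hk x
  have hc₁ := hasDerivAt_cn hk x
  have hd₁ := hasDerivAt_dn hk x
  have hs₂ := (hasDerivAt_sn hk (c - x)).comp x hsub
  have hc₂ := (hasDerivAt_cn hk (c - x)).comp x hsub
  have hd₂ := (hasDerivAt_dn hk (c - x)).comp x hsub
  have h := ((hd₁.mul hd₂).sub ((hc₁.const_mul k).mul hc₂)).div
    (((hs₁.const_mul k).mul hs₂).const_sub 1) (one_sub_mul_sn_mul_sn_pos hk x (c - x)).ne'
  refine h.congr_deriv (div_eq_zero_iff.2 (Or.inl ?_))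
  have ec₁ := sn_sq_add_cn_sq (k := k) x
  have ec₂ := sn_sq_add_cn_sq (k := k) (c - x)
  have ed₁ := dn_sq hk x
  have ed₂ := dn_sq hk (c - x)
  simp only [Function.comp_def, Pi.mul_apply, Pi.sub_apply]
  linear_combination (-k * sn x k * cn (c - x) k * dn x k) * ed₂ +
    (k * sn (c - x) k * cn x k * dn (c - x) k) * ed₁ +
    (k ^ 2 * sn x k * cn x k * dn (c - x) k) * ec₂ +
    (-k ^ 2 * sn (c - x) k * cn (c - x) k * dn x k) * ec₁

lemma dn_sub_mul_cn_add (hk : k ^ 2 < 1) (u v : ℝ) :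
    (dn (u + v) k - k * cn (u + v) k) * (1 - k * sn u k * sn v k) =
      dn u k * dn v k - k * cn u k * cn v k := by
  have hconst := is_const_of_deriv_eq_zero
    (fun x => (hasDerivAt_addition_quotient hk (u + v) x).differentiableAt)
    (fun x => (hasDerivAt_addition_quotient hk (u + v) x).deriv) u 0
  simp only [add_sub_cancel_left, sub_zero, sn_zero hk, cn_zero hk, dn_zero hk] at hconst
  rw [div_eq_iff (one_sub_mul_sn_mul_sn_pos hk u v).ne'] at hconst
  linear_combination -hconst

lemma mul_cn_lt_dn (hk : k ^ 2 < 1) (x : ℝ) : k * cn x k < dn x k := by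
  have h : (k * cn x k) ^ 2 < dn x k ^ 2 := by
    rw [dn_sq hk, mul_pow]
    nlinarith [sn_sq_add_cn_sq (k := k) x, sq_nonneg (sn x k)]
  exact lt_of_abs_lt (abs_lt_of_sq_lt_sq h (dn_pos hk x).le)

end Jacobi

namespace Real

lemma exp_log_div_div_two {a b : ℝ} (ha : 0 < a) (hb : 0 < b) :
    exp (log (a / b) / 2) = √a / √b := by
  rw [exp_half, exp_log (div_pos ha hb), sqrt_div ha.le]

lemma neg_log_div_div_two (a b : ℝ) : -(log (a / b) / 2) = log (b / a) / 2 := by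
  rw [← neg_div, ← log_inv, inv_div]

lemma cosh_log_div_div_two {a b : ℝ} (ha : 0 < a) (hb : 0 < b) :
    cosh (log (a / b) / 2) = (a + b) / (2 * √(a * b)) := by
  rw [cosh_eq, neg_log_div_div_two, exp_log_div_div_two ha hb, exp_log_div_div_two hb ha,
    sqrt_mul ha.le]
  field_simp
  rw [sq_sqrt ha.le, sq_sqrt hb.le]

lemma sinh_log_div_div_two {a b : ℝ} (ha : 0 < a) (hb : 0 < b) :
    sinh (log (a / b) / 2) = (a - b) / (2 * √(a * b)) := by
  rw [sinh_eq, neg_log_div_div_two, exp_log_div_div_two ha hb, exp_log_div_div_two hb ha,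
    sqrt_mul ha.le]
  field_simp
  rw [sq_sqrt ha.le, sq_sqrt hb.le]

end Real

/-- Identities (3.3)–(3.4) (with `s₁ = 1`) for the vertical coordinate of extremal
trajectories with `λ ∈ C₁`: with `φ = τ − p`, `φ_t = τ + p`,
`A = dn φ_t − k cn φ_t > 0`, `B = dn φ − k cn φ > 0`,
`Δ = 1 − k² sn² p sn² τ`, and `z = ln(A/B)`, one has
`cosh(z/2) = 1/√Δ` and `sinh(z/2) = k sn p sn τ/√Δ`. -/
theorem vertical_coordinate_C1 (k τ p : ℝ) (hk : k ∈ Set.Ioo (0:ℝ) 1) :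
    let φ : ℝ := τ - p
    let φt : ℝ := τ + p
    let A : ℝ := dn φt k - k * cn φt k
    let B : ℝ := dn φ k - k * cn φ k
    let Δ : ℝ := 1 - k ^ 2 * sn p k ^ 2 * sn τ k ^ 2
    0 < A ∧ 0 < B ∧
    Real.cosh (Real.log (A / B) / 2) = 1 / Real.sqrt Δ ∧
    Real.sinh (Real.log (A / B) / 2) = k * sn p k * sn τ k / Real.sqrt Δ := by
  intro φ φt A B Δ
  have hk2 : k ^ 2 < 1 := by nlinarith [hk.1, hk.2]
  have hA : 0 < A := sub_pos.2 (mul_cn_lt_dn hk2 _)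
  have hB : 0 < B := sub_pos.2 (mul_cn_lt_dn hk2 _)
  have hpos₁ : 0 < 1 + k * sn p k * sn τ k := by
    have h := one_sub_mul_sn_mul_sn_pos hk2 (-p) τ
    rw [sn_neg hk2] at h
    linarith
  have hpos₂ : 0 < 1 - k * sn p k * sn τ k := one_sub_mul_sn_mul_sn_pos hk2 p τ
  have hAB : A / B = (1 + k * sn p k * sn τ k) / (1 - k * sn p k * sn τ k) := by
    have hadd := dn_sub_mul_cn_add hk2 τ p
    have hsub := dn_sub_mul_cn_add hk2 τ (-p)
    rw [← sub_eq_add_neg, sn_neg hk2, cn_neg hk2, dn_neg hk2] at hsub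
    rw [div_eq_div_iff hB.ne' hpos₂.ne']
    linear_combination hadd - hsub
  have hΔ : (1 + k * sn p k * sn τ k) * (1 - k * sn p k * sn τ k) = Δ := by ring
  refine ⟨hA, hB, ?_, ?_⟩
  · rw [hAB, cosh_log_div_div_two hpos₁ hpos₂, hΔ]
    ring
  · rw [hAB, sinh_log_div_div_two hpos₁ hpos₂, hΔ]
    ring
end
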